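/- Let k be a perfect field of characteristic p, n ≥ m ≥ 1 integers, E a free W_n(k)-module, and let G_{m} = Z/p^{m}Z act on E^{⊗p^m} (tensor power over W_n(k)) by cyclic permutation, with G_{m+1} acting through the quotient G_{m+1} → G_m. If a, b ∈ E satisfy a ≡ b (mod p), then the images of a^{⊗p^m} and b^{⊗p^m} in the Tate cohomology group Ȟ⁰(G_{m+1}, E^{⊗p^m}) coincide, and likewise their images in Ȟ⁰(G_m, E^{⊗p^m}) coincide. -/

import Mathlib

/-!
Write `a = b + p c` with `N = p^m` and expand `a^{⊗N}` multilinearly: it is the sum over subsets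
`S ⊆ ℤ/N` of `p^{|S|}` times the pure tensor with `c` on `S` and `b` elsewhere, and the term of
`S = ∅` is `b^{⊗N}`. The cyclic shift moves these tensors as it moves the subsets, so
`|Stab S|` times the sum of the tensors over the orbit of `S` is the trace of the tensor of `S`.
For nonempty `S` the stabilizer is a subgroup of `ℤ/p^m` acting freely on `S`, so its order
`p^e` satisfies `e + 1 ≤ p^e ≤ |S|`, and `p^{|S|}` is divisible by `p · p^e`: every orbit
contributes `p` times a trace. As the shift has order `N`, the trace over `p^{m+1}` elements is
`p` times the trace over `p^m` elements.
-/

open scoped TensorProduct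
open Pointwise PiTensorProduct Finset

namespace AddAction

variable {G X M : Type*} [AddGroup G] [AddAction G X] [AddCommMonoid M]

theorem sum_vadd_eq_card_stabilizer_nsmul [Fintype G] (x : X) [Fintype (orbit G x)]
    (F : X → M) : ∑ g : G, F (g +ᵥ x) = Nat.card (stabilizer G x) • ∑ y : orbit G x, F y := by
  classical
  rw [Fintype.sum_equiv (orbitProdStabilizerEquivAddGroup G x).symm _ (fun yh => F yh.1) ?_,
    Fintype.sum_prod_type, Finset.smul_sum]
  · simp
  · -- the orbit-stabilizer bijection sends `g` to `(g +ᵥ x, _)` by construction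
    exact fun _ => rfl

theorem sum_eq_sum_orbits [Fintype X] [Fintype (orbitRel.Quotient G X)]
    [∀ x : X, Fintype (orbit G x)] (F : X → M) :
    ∑ x : X, F x = ∑ ω : orbitRel.Quotient G X, ∑ y : orbit G ω.out, F y :=
  (Fintype.sum_equiv (selfEquivSigmaOrbits G X) _ (fun s => F s.2) fun _ => rfl).trans
    (Fintype.sum_sigma _)

theorem card_stabilizer_finset_le [DecidableEq G] {S : Finset G} (hS : S.Nonempty) :
    Nat.card (stabilizer G S) ≤ #S := by
  obtain ⟨x, hx⟩ := hS
  rw [← Nat.card_eq_finsetCard]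
  refine Nat.card_le_card_of_injective (fun g => ⟨(g : G) + x, ?_⟩) fun g h hgh => ?_
  · simpa using mem_stabilizer_finset'.1 g.2 hx
  · simpa using hgh

theorem mul_card_stabilizer_finset_dvd [DecidableEq G] [Finite G] {p m : ℕ} (hp : p.Prime)
    (hG : Nat.card G = p ^ m) {S : Finset G} (hS : S.Nonempty) :
    p * Nat.card (stabilizer G S) ∣ p ^ #S := by
  obtain ⟨e, -, he⟩ :=
    (Nat.dvd_prime_pow hp).1 (hG ▸ AddSubgroup.card_addSubgroup_dvd_card (stabilizer G S))
  rw [he, ← pow_succ']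
  refine pow_dvd_pow p ?_
  have hle := card_stabilizer_finset_le hS
  have hlt := Nat.lt_pow_self hp.one_lt (n := e)
  omega

end AddAction

theorem ZMod.sum_range_natCast {M : Type*} [AddCommMonoid M] (N : ℕ) [NeZero N]
    (f : ZMod N → M) : ∑ j ∈ range N, f j = ∑ g : ZMod N, f g := by
  obtain ⟨k, rfl⟩ := Nat.exists_eq_succ_of_ne_zero (NeZero.ne N)
  rw [← Fin.sum_univ_eq_sum_range (fun j => f j)]
  exact Fintype.sum_congr _ _ fun i => congrArg f (Fin.cast_val_eq_self i)

section CyclicTrace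

variable {R V : Type*} [Semiring R] [AddCommMonoid V] [Module R V]

noncomputable def cyclicTrace (P : Module.End R V) (N : ℕ) : Module.End R V :=
  ∑ j ∈ range N, P ^ j

theorem cyclicTrace_apply (P : Module.End R V) (N : ℕ) (v : V) :
    cyclicTrace P N v = ∑ j ∈ range N, (P ^ j) v :=
  LinearMap.sum_apply _ _ _

theorem cyclicTrace_mul_of_pow_eq_one {P : Module.End R V} {N : ℕ} (hP : P ^ N = 1) (k : ℕ) :
    cyclicTrace P (k * N) = k • cyclicTrace P N := by
  induction k with
  | zero => simp [cyclicTrace]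
  | succ k ih =>
    rw [cyclicTrace, add_mul, one_mul, sum_range_add, ← cyclicTrace, ih, succ_nsmul, cyclicTrace]
    congr 1
    refine sum_congr rfl fun j _ => ?_
    rw [pow_add, pow_mul', hP, one_pow, one_mul]

end CyclicTrace

section TensorPower

variable (R : Type*) [CommSemiring R] {ι M : Type*} [AddCommMonoid M] [Module R M]

noncomputable def mixedTprod [DecidableEq ι] (b c : M) (S : Finset ι) : ⨂[R] _ : ι, M :=
  tprod R (S.piecewise (fun _ => c) (fun _ => b))

theorem tprod_add_smul_eq_sum_mixedTprod [DecidableEq ι] [Fintype ι] (b c : M) (r : R) :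
    tprod R (fun _ : ι => b + r • c) = ∑ S : Finset ι, r ^ #S • mixedTprod R b c S := by
  rw [show (fun _ : ι => b + r • c) = (fun _ => r • c) + (fun _ => b) from
    funext fun _ => add_comm _ _, MultilinearMap.map_add_univ]
  refine sum_congr rfl fun S _ => ?_
  have h := (PiTensorProduct.tprod R).map_piecewise_smul (fun _ => r)
    (S.piecewise (fun _ => c) (fun _ : ι => b)) S
  rw [prod_const] at h
  rw [mixedTprod, ← h]
  congr 1
  ext i
  by_cases hi : i ∈ S <;> simp [hi]

variable (ι M) in
noncomputable def tensorShift [AddGroupWithOne ι] : Module.End R (⨂[R] _ : ι, M) :=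
  (reindex R (fun _ : ι => M) (Equiv.addLeft 1)).toLinearMap

variable {R}

theorem tensorShift_tprod [AddGroupWithOne ι] (f : ι → M) :
    tensorShift R ι M (tprod R f) = tprod R fun i => f (-1 + i) := by
  simp [tensorShift]

theorem tensorShift_pow_tprod [AddGroupWithOne ι] (j : ℕ) (f : ι → M) :
    (tensorShift R ι M ^ j) (tprod R f) = tprod R fun i => f (-(j : ι) + i) := by
  induction j generalizing f with
  | zero => simp
  | succ j ih =>
    rw [pow_succ, Module.End.mul_apply, tensorShift_tprod, ih]
    simp [add_assoc]

theorem tensorShift_pow_mixedTprod [AddGroupWithOne ι] [DecidableEq ι] (j : ℕ) (b c : M)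
    (S : Finset ι) :
    (tensorShift R ι M ^ j) (mixedTprod R b c S) = mixedTprod R b c ((j : ι) +ᵥ S) := by
  rw [mixedTprod, tensorShift_pow_tprod, mixedTprod]
  congr 1
  ext i
  simp [Finset.piecewise, ← Finset.neg_vadd_mem_iff]

theorem tensorShift_pow_card (N : ℕ) : tensorShift R (ZMod N) M ^ N = 1 :=
  ext <| MultilinearMap.ext fun f => by simp [tensorShift_pow_tprod]

variable {N : ℕ} [NeZero N]

theorem cyclicTrace_mixedTprod (b c : M) (S : Finset (ZMod N))
    [Fintype (AddAction.orbit (ZMod N) S)] :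
    cyclicTrace (tensorShift R (ZMod N) M) N (mixedTprod R b c S)
      = Nat.card (AddAction.stabilizer (ZMod N) S)
          • ∑ y : AddAction.orbit (ZMod N) S, mixedTprod R b c ↑y := by
  rw [cyclicTrace_apply]
  simp only [tensorShift_pow_mixedTprod]
  rw [ZMod.sum_range_natCast N (fun g => mixedTprod R b c (g +ᵥ S)),
    AddAction.sum_vadd_eq_card_stabilizer_nsmul]

theorem smul_sum_orbit_mixedTprod_mem_range (t κ : R) (b c : M) (S : Finset (ZMod N))
    [Fintype (AddAction.orbit (ZMod N) S)]
    (hκ : t * Nat.card (AddAction.stabilizer (ZMod N) S) ∣ κ) :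
    κ • ∑ y : AddAction.orbit (ZMod N) S, mixedTprod R b c ↑y
      ∈ LinearMap.range (t • cyclicTrace (tensorShift R (ZMod N) M) N) := by
  obtain ⟨r, rfl⟩ := hκ
  refine ⟨r • mixedTprod R b c S, ?_⟩
  rw [LinearMap.smul_apply, map_smul, cyclicTrace_mixedTprod, smul_smul,
    ← Nat.cast_smul_eq_nsmul R, smul_smul]
  congr 1
  ring

end TensorPower

theorem tprod_add_smul_sub_tprod_mem_range {R M : Type*} [CommRing R] [AddCommGroup M]
    [Module R M] {p m : ℕ} (hp : p.Prime) (b c : M) :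
    tprod R (fun _ : ZMod (p ^ m) => b + (p : R) • c) - tprod R (fun _ => b)
      ∈ LinearMap.range ((p : R) • cyclicTrace (tensorShift R (ZMod (p ^ m)) M) (p ^ m)) := by
  classical
  have : NeZero (p ^ m) := ⟨pow_ne_zero _ hp.ne_zero⟩
  -- `b^{⊗N}` is the expansion at `r = 0`, where `0 ^ #S` is the indicator of `S = ∅`; the
  -- resulting coefficients `p ^ #S - 0 ^ #S` depend on `#S` only, hence are constant on orbits
  have hb := tprod_add_smul_eq_sum_mixedTprod (ι := ZMod (p ^ m)) R b c 0
  rw [zero_smul, add_zero] at hb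
  rw [tprod_add_smul_eq_sum_mixedTprod, hb, ← sum_sub_distrib]
  simp_rw [← sub_smul]
  rw [AddAction.sum_eq_sum_orbits (G := ZMod (p ^ m))]
  refine Submodule.sum_mem _ fun ω _ => ?_
  set S := ω.out
  have hcard : ∀ y : AddAction.orbit (ZMod (p ^ m)) S, #(y : Finset (ZMod (p ^ m))) = #S := by
    rintro ⟨_, g, rfl⟩
    exact card_vadd_finset g S
  simp_rw [hcard, ← smul_sum]
  refine smul_sum_orbit_mixedTprod_mem_range _ _ b c S ?_
  rcases S.eq_empty_or_nonempty with hS | hS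
  · simp [hS]
  · rw [zero_pow (card_ne_zero.2 hS), sub_zero]
    have hdvd := Nat.cast_dvd_cast (α := R)
      (AddAction.mul_card_stabilizer_finset_dvd hp (Nat.card_zmod _) hS)
    push_cast at hdvd
    exact hdvd

theorem stmt_10_general (p : ℕ) [Fact p.Prime] (k : Type*) [Field k]
    (m n : ℕ)
    (E : Type*) [AddCommGroup E] [Module (TruncatedWittVector p n k) E]
    (a b : E) (hab : ∃ c : E, a = b + (p : TruncatedWittVector p n k) • c)
    (P : (⨂[TruncatedWittVector p n k] _ : ZMod (p ^ m), E) →ₗ[TruncatedWittVector p n k]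
        ⨂[TruncatedWittVector p n k] _ : ZMod (p ^ m), E)
    (hP : P = (PiTensorProduct.reindex (TruncatedWittVector p n k)
        (fun _ : ZMod (p ^ m) => E) (Equiv.addLeft (1 : ZMod (p ^ m)))).toLinearMap) :
    (∃ v : ⨂[TruncatedWittVector p n k] _ : ZMod (p ^ m), E,
        (PiTensorProduct.tprod (TruncatedWittVector p n k) fun _ : ZMod (p ^ m) => a)
            - PiTensorProduct.tprod (TruncatedWittVector p n k) (fun _ : ZMod (p ^ m) => b)
          = ∑ j ∈ Finset.range (p ^ (m + 1)), (P ^ j) v)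
    ∧ (∃ v : ⨂[TruncatedWittVector p n k] _ : ZMod (p ^ m), E,
        (PiTensorProduct.tprod (TruncatedWittVector p n k) fun _ : ZMod (p ^ m) => a)
            - PiTensorProduct.tprod (TruncatedWittVector p n k) (fun _ : ZMod (p ^ m) => b)
          = ∑ j ∈ Finset.range (p ^ m), (P ^ j) v) := by
  set R := TruncatedWittVector p n k
  obtain ⟨c, rfl⟩ := hab
  obtain rfl : P = tensorShift R (ZMod (p ^ m)) E := hP
  obtain ⟨u, hu⟩ := tprod_add_smul_sub_tprod_mem_range (R := R) (p := p) (m := m) Fact.out b c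
  rw [LinearMap.smul_apply, ← map_smul] at hu
  simp only [← cyclicTrace_apply]
  refine ⟨⟨u, ?_⟩, ⟨(p : R) • u, hu.symm⟩⟩
  rw [← hu, pow_succ', cyclicTrace_mul_of_pow_eq_one (tensorShift_pow_card _) p, nsmul_eq_mul,
    Module.End.mul_apply, Module.End.natCast_apply, ← Nat.cast_smul_eq_nsmul R, map_smul]

/-- Let `k` be a perfect field of characteristic `p`, `n ≥ m ≥ 1`, `E` a free module over
`W_n(k)`, and let the cyclic group `G_m = Z/p^mZ` act on `E^{⊗p^m}` by cyclic permutation of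
the factors (the generator `P` acting by reindexing along `x ↦ x + 1` on `ZMod (p^m)`), with
`G_{m+1}` acting through the quotient `G_{m+1} → G_m`. If `a ≡ b (mod p)` in `E`, then the
classes of `a^{⊗p^m}` and `b^{⊗p^m}` agree in `Ȟ⁰(G_{m+1}, E^{⊗p^m})` and in
`Ȟ⁰(G_m, E^{⊗p^m})`, i.e. their difference lies in the image of the corresponding trace map
`∑_j P^j` (over `p^{m+1}` resp. `p^m` group elements). -/
theorem stmt_10 (p : ℕ) [Fact p.Prime] (k : Type*) [Field k] [CharP k p] [PerfectRing k p]
    (m n : ℕ) (hm : 1 ≤ m) (hmn : m ≤ n)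
    (E : Type*) [AddCommGroup E] [Module (TruncatedWittVector p n k) E]
    [Module.Free (TruncatedWittVector p n k) E]
    (a b : E) (hab : ∃ c : E, a = b + (p : TruncatedWittVector p n k) • c)
    (P : (⨂[TruncatedWittVector p n k] _ : ZMod (p ^ m), E) →ₗ[TruncatedWittVector p n k]
        ⨂[TruncatedWittVector p n k] _ : ZMod (p ^ m), E)
    (hP : P = (PiTensorProduct.reindex (TruncatedWittVector p n k)
        (fun _ : ZMod (p ^ m) => E) (Equiv.addLeft (1 : ZMod (p ^ m)))).toLinearMap) :
    (∃ v : ⨂[TruncatedWittVector p n k] _ : ZMod (p ^ m), E,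
        (PiTensorProduct.tprod (TruncatedWittVector p n k) fun _ : ZMod (p ^ m) => a)
            - PiTensorProduct.tprod (TruncatedWittVector p n k) (fun _ : ZMod (p ^ m) => b)
          = ∑ j ∈ Finset.range (p ^ (m + 1)), (P ^ j) v)
    ∧ (∃ v : ⨂[TruncatedWittVector p n k] _ : ZMod (p ^ m), E,
        (PiTensorProduct.tprod (TruncatedWittVector p n k) fun _ : ZMod (p ^ m) => a)
            - PiTensorProduct.tprod (TruncatedWittVector p n k) (fun _ : ZMod (p ^ m) => b)
          = ∑ j ∈ Finset.range (p ^ m), (P ^ j) v) :=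
  stmt_10_general p k m n E a b hab P hP
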